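/- arXiv:1601.04856 — 2 statements merged into one kernel-verified Lean document; each statement's English description precedes it below -/
import Mathlib

section
/- For every positive integer k and every hypergraph H of order n ≤ 2^{k−1} − 1, every k-corona H^k of H satisfies τ_g(H^k) = 2τ(H^k) − 1 = 2n − 1 and τ_g'(H^k) = 2τ(H^k) = 2n. -/
/-!
Edge-hitter can always play a vertex of a fixed transversal `T` that hits an uncovered edge, so
each of his moves uses up a vertex of `T`; hence `τ_g ≤ 2|T| - 1` and `τ_g' ≤ 2|T|` in every
hypergraph. In a corona, `X` is a transversal and one pendant edge at each vertex gives `n`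
pairwise disjoint edges, so `τ = n`.

For the lower bounds let `d(x)` be the number of uncovered pendant edges at `x ∈ X`, and put
`Φ = Σ min(d(x), 2)` and `W = Σ_{d(x) ≥ 2} 2^(k - d(x))`. A move changes `d` at a single
vertex, killing it (a vertex of `X`) or lowering it by one (a leaf). By induction on the game: if
`W ≤ m·2^(k-1)` with Edge-hitter to move, at least `Φ - m` moves remain, and if `W < m·2^(k-1)`
with Staller to move, at least `Φ + 1 - m` remain. Edge-hitter lowers `Φ` by two only by lowering
`W`; any other move raises `W` by less than `2^(k-1)`, paid for by passing from `m` to `m + 1`.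
Staller plays a leaf at a vertex of maximal degree `D`. Since `2^(k-D)` divides `W`, there is room
`W + 2^(k-D) ≤ m·2^(k-1)`: for `D ≥ 3` the move keeps `Φ` and raises `W` by exactly `2^(k-D)`,
and for `D = 2` it lowers `Φ` by one and `W` by `2^(k-2)`, to at most `(m-1)·2^(k-1)`.
Initially `Φ = 2n` and `W = n < 2^(k-1)`, and `m = 1` gives `τ_g ≥ 2n - 1` and `τ_g' ≥ 2n`.
-/

variable {V : Type} [Fintype V] [DecidableEq V]

/-- The set of legal moves in the transversal game with uncovered edge set `E`:
the vertices hitting at least one uncovered edge. -/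
def playable (E : Finset (Finset V)) : Finset V :=
  Finset.univ.filter (fun v => ∃ e ∈ E, v ∈ e)

/-- The number of moves remaining in the transversal game with uncovered edge set `E`
under optimal play, where `ehTurn = true` iff Edge-hitter (the minimizer) moves next;
Staller (the maximizer) moves next iff `ehTurn = false`.  Each move must hit at least
one uncovered edge, and the game ends when no uncovered edge remains. -/
def gameVal (ehTurn : Bool) (E : Finset (Finset V)) : ℕ :=
  if h : (playable E).Nonempty then
    1 +
      (if ehTurn then
        (playable E).attach.inf' (Finset.attach_nonempty_iff.mpr h)
          (fun v => gameVal (!ehTurn) (E.filter (fun e => v.1 ∉ e)))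
      else
        (playable E).attach.sup' (Finset.attach_nonempty_iff.mpr h)
          (fun v => gameVal (!ehTurn) (E.filter (fun e => v.1 ∉ e))))
  else 0
termination_by E.card
decreasing_by
  all_goals
    obtain ⟨v, hv⟩ := v
    simp only [playable, Finset.mem_filter, Finset.mem_univ, true_and] at hv
    obtain ⟨e, he, hve⟩ := hv
    exact Finset.card_lt_card (Finset.filter_ssubset.mpr ⟨e, he, by simp [hve]⟩)

/-- The game transversal number `τ_g`: Edge-hitter makes the first move. -/
def gameTransversalNum (E : Finset (Finset V)) : ℕ := gameVal true E

/-- The Staller-start game transversal number `τ_g'`: Staller makes the first move. -/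
def stallerGameTransversalNum (E : Finset (Finset V)) : ℕ := gameVal false E

/-- The transversal number `τ`: the minimum size of a set of vertices meeting all edges. -/
noncomputable def transversalNum (E : Finset (Finset V)) : ℕ :=
  sInf {n | ∃ T : Finset V, (∀ e ∈ E, ∃ v ∈ T, v ∈ e) ∧ T.card = n}

open Finset

section Transversal

variable {α : Type*}

def IsTransversal (E : Finset (Finset α)) (T : Finset α) : Prop :=
  ∀ e ∈ E, ∃ v ∈ T, v ∈ e

theorem IsTransversal.mono {E E' : Finset (Finset α)} {T : Finset α} (hT : IsTransversal E T)
    (h : E' ⊆ E) : IsTransversal E' T :=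
  fun e he => hT e (h he)

theorem IsTransversal.filter_erase [DecidableEq α] {E : Finset (Finset α)} {T : Finset α}
    (hT : IsTransversal E T) (v : α) :
    IsTransversal (E.filter (fun e => v ∉ e)) (T.erase v) := by
  intro e he
  rw [mem_filter] at he
  obtain ⟨u, huT, hue⟩ := hT e he.1
  exact ⟨u, mem_erase.2 ⟨fun h => he.2 (h ▸ hue), huT⟩, hue⟩

theorem IsTransversal.card_pos {E : Finset (Finset α)} {T : Finset α} (hT : IsTransversal E T)
    (hE : E.Nonempty) : 0 < T.card := by
  obtain ⟨e, he⟩ := hE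
  obtain ⟨v, hv, -⟩ := hT e he
  exact Finset.card_pos.2 ⟨v, hv⟩

theorem IsTransversal.card_le {ι : Type*} {E : Finset (Finset α)} {T : Finset α} {s : Finset ι}
    {f : ι → Finset α} (hT : IsTransversal E T) (hf : ∀ i ∈ s, f i ∈ E)
    (hdisj : (s : Set ι).PairwiseDisjoint f) : s.card ≤ T.card := by
  refine card_le_card_of_forall_subsingleton (fun i v => v ∈ f i) (fun i hi => hT _ (hf i hi))
    ?_
  rintro v - i ⟨hi, hvi⟩ j ⟨hj, hvj⟩
  by_contra hne
  exact disjoint_left.1 (hdisj hi hj hne) hvi hvj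

end Transversal

theorem transversalNum_le_card {α : Type} {E : Finset (Finset α)} {T : Finset α}
    (hT : IsTransversal E T) : transversalNum E ≤ T.card :=
  Nat.sInf_le ⟨T, hT, rfl⟩

theorem card_le_transversalNum {α : Type} {ι : Type*} {E : Finset (Finset α)} {s : Finset ι}
    {f : ι → Finset α} (hE : ∃ T, IsTransversal E T) (hf : ∀ i ∈ s, f i ∈ E)
    (hdisj : (s : Set ι).PairwiseDisjoint f) : s.card ≤ transversalNum E := by
  obtain ⟨T₀, hT₀⟩ := hE
  refine le_csInf ⟨_, T₀, hT₀, rfl⟩ ?_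
  rintro _ ⟨T, hT, rfl⟩
  exact IsTransversal.card_le hT hf hdisj

section Game

variable {E : Finset (Finset V)} {v : V}

theorem mem_playable : v ∈ playable E ↔ ∃ e ∈ E, v ∈ e := by
  simp [playable]

theorem filter_ssubset_of_mem_playable (hv : v ∈ playable E) :
    E.filter (fun e => v ∉ e) ⊂ E := by
  obtain ⟨e, he, hve⟩ := mem_playable.1 hv
  exact filter_ssubset.2 ⟨e, he, not_not.2 hve⟩

theorem gameVal_of_not_nonempty (t : Bool) (h : ¬(playable E).Nonempty) : gameVal t E = 0 := by
  rw [gameVal, dif_neg h]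

theorem gameVal_true_le_of_mem (hv : v ∈ playable E) :
    gameVal true E ≤ 1 + gameVal false (E.filter (fun e => v ∉ e)) := by
  conv_lhs => rw [gameVal]
  rw [dif_pos ⟨v, hv⟩, if_pos rfl]
  exact Nat.add_le_add_left (inf'_le _ (mem_attach _ ⟨v, hv⟩)) 1

theorem le_gameVal_false_of_mem (hv : v ∈ playable E) :
    1 + gameVal true (E.filter (fun e => v ∉ e)) ≤ gameVal false E := by
  conv_rhs => rw [gameVal]
  rw [dif_pos ⟨v, hv⟩, if_neg Bool.false_ne_true]
  exact Nat.add_le_add_left (le_sup' (fun w : playable E => gameVal (!false)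
    (E.filter (fun e => w.1 ∉ e))) (mem_attach _ ⟨v, hv⟩)) 1

theorem le_gameVal_true (h : (playable E).Nonempty) {c : ℕ}
    (hc : ∀ v ∈ playable E, c ≤ 1 + gameVal false (E.filter (fun e => v ∉ e))) :
    c ≤ gameVal true E := by
  rw [gameVal, dif_pos h, if_pos rfl]
  have : c - 1 ≤ (playable E).attach.inf' (attach_nonempty_iff.2 h)
      (fun w => gameVal (!true) (E.filter (fun e => w.1 ∉ e))) :=
    le_inf' _ _ fun w _ => by have := hc w.1 w.2; simp only [Bool.not_true]; omega
  omega

theorem gameVal_false_le {c : ℕ}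
    (hc : ∀ v ∈ playable E, 1 + gameVal true (E.filter (fun e => v ∉ e)) ≤ c) :
    gameVal false E ≤ c := by
  by_cases h : (playable E).Nonempty
  · rw [gameVal, dif_pos h, if_neg Bool.false_ne_true]
    have hfirst := hc _ h.choose_spec
    have : (playable E).attach.sup' (attach_nonempty_iff.2 h)
        (fun w => gameVal (!false) (E.filter (fun e => w.1 ∉ e))) ≤ c - 1 :=
      sup'_le _ _ fun w _ => by have := hc w.1 w.2; simp only [Bool.not_false]; omega
    omega
  · rw [gameVal_of_not_nonempty false h]
    exact Nat.zero_le c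

theorem gameVal_le_of_isTransversal {T : Finset V} (hT : IsTransversal E T) :
    gameVal true E ≤ 2 * T.card - 1 ∧ gameVal false E ≤ 2 * T.card := by
  induction E using Finset.strongInduction generalizing T with
  | H E ih =>
  refine ⟨?_, gameVal_false_le fun v hv => ?_⟩
  · by_cases h : (playable E).Nonempty
    · obtain ⟨e, he, -⟩ := mem_playable.1 h.choose_spec
      obtain ⟨v, hvT, hve⟩ := hT e he
      have hv : v ∈ playable E := mem_playable.2 ⟨e, he, hve⟩
      have hnext := (ih _ (filter_ssubset_of_mem_playable hv) (hT.filter_erase v)).2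
      have hcard := card_erase_add_one hvT
      have := gameVal_true_le_of_mem hv
      omega
    · rw [gameVal_of_not_nonempty true h]
      exact Nat.zero_le _
  · have hnext := (ih _ (filter_ssubset_of_mem_playable hv) (hT.mono (filter_subset _ _))).1
    obtain ⟨e, he, -⟩ := mem_playable.1 hv
    have := hT.card_pos ⟨e, he⟩
    omega

end Game

theorem Nat.add_le_of_dvd_of_lt {a b c : ℕ} (ha : c ∣ a) (hb : c ∣ b) (h : a < b) :
    a + c ≤ b := by
  obtain ⟨a, rfl⟩ := ha
  obtain ⟨b, rfl⟩ := hb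
  calc c * a + c = c * (a + 1) := (mul_add_one c a).symm
    _ ≤ c * b := Nat.mul_le_mul_left c (Nat.lt_of_mul_lt_mul_left h)

theorem two_le_of_mem_of_card_lt {α : Type*} {s : Finset α} {x : α} {k : ℕ} (hx : x ∈ s)
    (hs : s.card < 2 ^ (k - 1)) : 2 ≤ k := by
  have : k - 1 ≠ 0 := Nat.one_lt_two_pow_iff.1 (lt_of_le_of_lt (Finset.card_pos.2 ⟨x, hx⟩) hs)
  omega

namespace Corona

section Potential

variable {ι : Type*} (k : ℕ) (X : Finset ι)

def potential (d : ι → ℕ) : ℕ :=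
  ∑ x ∈ X, min (d x) 2

def weight (d : ι → ℕ) : ℕ :=
  ∑ x ∈ X, if 2 ≤ d x then 2 ^ (k - d x) else 0

variable {k X} {d d' : ι → ℕ} {x : ι}

theorem sum_add_eq_sum_add_of_eq_off {M : Type*} [AddCommMonoid M] (g : ℕ → M) (hx : x ∈ X)
    (hoff : ∀ y ∈ X, y ≠ x → d' y = d y) :
    ∑ y ∈ X, g (d' y) + g (d x) = ∑ y ∈ X, g (d y) + g (d' x) := by
  classical
  rw [← add_sum_erase _ _ hx, ← add_sum_erase _ (fun y => g (d y)) hx,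
    sum_congr rfl fun y hy => by rw [hoff y (mem_of_mem_erase hy) (ne_of_mem_erase hy)]]
  abel

theorem potential_add_eq (hx : x ∈ X) (hoff : ∀ y ∈ X, y ≠ x → d' y = d y) :
    potential X d' + min (d x) 2 = potential X d + min (d' x) 2 :=
  sum_add_eq_sum_add_of_eq_off (fun n => min n 2) hx hoff

theorem weight_add_eq (hx : x ∈ X) (hoff : ∀ y ∈ X, y ≠ x → d' y = d y) :
    weight k X d' + (if 2 ≤ d x then 2 ^ (k - d x) else 0) =
      weight k X d + (if 2 ≤ d' x then 2 ^ (k - d' x) else 0) :=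
  sum_add_eq_sum_add_of_eq_off (fun n => if 2 ≤ n then 2 ^ (k - n) else 0) hx hoff

theorem weight_eq_zero (h : ∀ x ∈ X, d x ≤ 1) : weight k X d = 0 :=
  sum_eq_zero fun x hx => if_neg (by have := h x hx; omega)

theorem two_pow_dvd_weight {D : ℕ} (h : ∀ y ∈ X, 2 ≤ d y → d y ≤ D) :
    2 ^ (k - D) ∣ weight k X d :=
  dvd_sum fun y hy => by
    split_ifs with h2
    · exact pow_dvd_pow 2 (Nat.sub_le_sub_left (h y hy h2) k)
    · exact dvd_zero _

theorem potential_weight_of_move (hx : x ∈ X) (hoff : ∀ y ∈ X, y ≠ x → d' y = d y)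
    (hd : d' x = 0 ∨ d' x + 1 = d x) (hdk : d x ≤ k) :
    (potential X d' + 2 = potential X d ∧ weight k X d' < weight k X d) ∨
      (potential X d ≤ potential X d' + 1 ∧
        weight k X d' + 1 ≤ weight k X d + 2 ^ (k - 1)) := by
  have hP := potential_add_eq hx hoff
  have hW := weight_add_eq (k := k) hx hoff
  have h1 : 1 ≤ 2 ^ (k - 1) := Nat.one_le_two_pow
  have hpos : 1 ≤ 2 ^ (k - d x) := Nat.one_le_two_pow
  by_cases h2 : 2 ≤ d x
  · rcases hd with h0 | hdec
    · rw [h0, if_pos h2, if_neg (by omega)] at hW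
      rw [h0] at hP
      left
      omega
    · right
      by_cases h3 : 3 ≤ d x
      · have hdx : k - d' x = k - d x + 1 := by omega
        have hsmall : 2 ^ (k - d x) * 4 ≤ 2 ^ (k - 1) := by
          rw [show 4 = 2 ^ 2 by rfl, ← pow_add]
          exact Nat.pow_le_pow_right two_pos (by omega)
        rw [if_pos h2, if_pos (by omega), hdx, pow_succ] at hW
        omega
      · rw [if_pos h2, if_neg (by omega)] at hW
        omega
  · rw [if_neg h2, if_neg (by omega)] at hW
    right
    omega

theorem potential_weight_of_leaf_two (hx : x ∈ X) (hoff : ∀ y ∈ X, y ≠ x → d' y = d y)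
    (hd : d' x + 1 = d x) (h2 : d x = 2) :
    potential X d' + 1 = potential X d ∧ weight k X d' + 2 ^ (k - 2) = weight k X d := by
  have hP := potential_add_eq hx hoff
  have hW := weight_add_eq (k := k) hx hoff
  rw [h2, if_pos le_rfl, if_neg (by omega)] at hW
  omega

theorem potential_weight_of_leaf_of_three_le (hx : x ∈ X)
    (hoff : ∀ y ∈ X, y ≠ x → d' y = d y) (hd : d' x + 1 = d x) (h3 : 3 ≤ d x)
    (hdk : d x ≤ k) :
    potential X d' = potential X d ∧ weight k X d' = weight k X d + 2 ^ (k - d x) := by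
  have hP := potential_add_eq hx hoff
  have hW := weight_add_eq (k := k) hx hoff
  have hdx : k - d' x = k - d x + 1 := by omega
  rw [if_pos (by omega), if_pos (by omega), hdx, pow_succ] at hW
  omega

end Potential

section

variable {α : Type}

/-- `E₀ ∪ X.biUnion A` is a corona of the hypergraph `(X, E₀)`: `A x` holds the edges attached
at `x`. -/
structure IsCorona (X : Finset α) (E₀ : Finset (Finset α)) (A : α → Finset (Finset α)) :
    Prop where
  base : ∀ e ∈ E₀, e.Nonempty ∧ e ⊆ X
  pendant : ∀ x ∈ X, ∀ f ∈ A x, x ∈ f ∧ 2 ≤ f.card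
  fresh : ∀ x ∈ X, ∀ f ∈ A x, ∀ w ∈ f, w ≠ x →
    w ∉ X ∧ (∀ e ∈ E₀, w ∉ e) ∧
      ∀ y ∈ X, ∀ g ∈ A y, w ∈ g → y = x ∧ g = f

def pendantDegree [DecidableEq α] (A : α → Finset (Finset α)) (E : Finset (Finset α))
    (x : α) : ℕ :=
  ((A x).filter (· ∈ E)).card

theorem pendantDegree_filter_of_forall_notMem [DecidableEq α] {A : α → Finset (Finset α)}
    {E : Finset (Finset α)} {v y : α} (h : ∀ f ∈ A y, v ∉ f) :
    pendantDegree A (E.filter (fun e => v ∉ e)) y = pendantDegree A E y := by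
  simp only [pendantDegree, mem_filter]
  congr 1
  exact filter_congr fun f hf => by simp [h f hf]

theorem pendantDegree_le_card [DecidableEq α] {A : α → Finset (Finset α)}
    {E : Finset (Finset α)} {x : α} : pendantDegree A E x ≤ (A x).card :=
  card_filter_le _ _

namespace IsCorona

variable {X : Finset α} {E₀ : Finset (Finset α)} {A : α → Finset (Finset α)}

theorem disjoint (hH : IsCorona X E₀ A) {x y : α} (hx : x ∈ X) (hy : y ∈ X) (hxy : x ≠ y)
    {f g : Finset α} (hf : f ∈ A x) (hg : g ∈ A y) : Disjoint f g := by
  refine disjoint_left.2 fun w hwf hwg => ?_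
  by_cases hwx : w = x
  · subst hwx
    exact (hH.fresh y hy g hg w hwg hxy).1 hx
  · exact hxy ((hH.fresh x hx f hf w hwf hwx).2.2 y hy g hg hwg).1.symm

theorem isTransversal [DecidableEq α] (hH : IsCorona X E₀ A) :
    IsTransversal (E₀ ∪ X.biUnion A) X := by
  intro e he
  rcases mem_union.1 he with he₀ | heA
  · obtain ⟨v, hv⟩ := (hH.base e he₀).1
    exact ⟨v, (hH.base e he₀).2 hv, hv⟩
  · obtain ⟨x, hx, hex⟩ := mem_biUnion.1 heA
    exact ⟨x, hx, (hH.pendant x hx e hex).1⟩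

theorem transversalNum_eq [DecidableEq α] (hH : IsCorona X E₀ A)
    (hA : ∀ x ∈ X, (A x).Nonempty) : transversalNum (E₀ ∪ X.biUnion A) = X.card := by
  choose! f hf using hA
  refine le_antisymm (transversalNum_le_card hH.isTransversal) ?_
  exact card_le_transversalNum ⟨X, hH.isTransversal⟩
    (fun x hx => mem_union_right _ (mem_biUnion.2 ⟨x, hx, hf x hx⟩))
    fun x hx y hy hxy => hH.disjoint hx hy hxy (hf x hx) (hf y hy)

theorem pendantDegree_filter_self [DecidableEq α] (hH : IsCorona X E₀ A)
    {E : Finset (Finset α)} {x : α} (hx : x ∈ X) :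
    (∀ y ∈ X, y ≠ x →
        pendantDegree A (E.filter (fun e => x ∉ e)) y = pendantDegree A E y) ∧
      pendantDegree A (E.filter (fun e => x ∉ e)) x = 0 := by
  refine ⟨fun y hy hyx => pendantDegree_filter_of_forall_notMem fun f hf hxf =>
    (hH.fresh y hy f hf x hxf hyx.symm).1 hx, ?_⟩
  refine card_eq_zero.2 (filter_eq_empty_iff.2 fun f hf hfE => ?_)
  exact (mem_filter.1 hfE).2 (hH.pendant x hx f hf).1

theorem pendantDegree_filter_leaf [DecidableEq α] (hH : IsCorona X E₀ A)
    {E : Finset (Finset α)} {v x : α} (hx : x ∈ X) {f : Finset α} (hf : f ∈ A x)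
    (hfE : f ∈ E) (hv : v ∈ f) (hvx : v ≠ x) :
    (∀ y ∈ X, y ≠ x →
        pendantDegree A (E.filter (fun e => v ∉ e)) y = pendantDegree A E y) ∧
      pendantDegree A (E.filter (fun e => v ∉ e)) x + 1 = pendantDegree A E x := by
  have hunique := (hH.fresh x hx f hf v hv hvx).2.2
  refine ⟨fun y hy hyx => pendantDegree_filter_of_forall_notMem fun g hg hvg =>
    hyx (hunique y hy g hg hvg).1, ?_⟩
  have herase :
      (A x).filter (· ∈ E.filter (fun e => v ∉ e)) = ((A x).filter (· ∈ E)).erase f := by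
    ext g
    simp only [mem_filter, mem_erase]
    constructor
    · rintro ⟨hg, hgE, hvg⟩
      exact ⟨fun hgf => hvg (hgf ▸ hv), hg, hgE⟩
    · rintro ⟨hgf, hg, hgE⟩
      exact ⟨hg, hgE, fun hvg => hgf (hunique x hx g hg hvg).2⟩
  rw [pendantDegree, herase, card_erase_add_one (mem_filter.2 ⟨hf, hfE⟩), pendantDegree]

end IsCorona

end

section

def EdgeHitterBound (k : ℕ) (X : Finset V) (A : V → Finset (Finset V))
    (E : Finset (Finset V)) (m : ℕ) : Prop :=
  weight k X (pendantDegree A E) ≤ m * 2 ^ (k - 1) →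
    potential X (pendantDegree A E) ≤ gameVal true E + m

def StallerBound (k : ℕ) (X : Finset V) (A : V → Finset (Finset V))
    (E : Finset (Finset V)) (m : ℕ) : Prop :=
  weight k X (pendantDegree A E) + 1 ≤ m * 2 ^ (k - 1) →
    potential X (pendantDegree A E) + 1 ≤ gameVal false E + m

variable {k : ℕ} {X : Finset V} {E₀ : Finset (Finset V)} {A : V → Finset (Finset V)}
  {E : Finset (Finset V)} {v x : V}

namespace IsCorona

variable (hH : IsCorona X E₀ A)
include hH

theorem exists_pendantDegree_filter (hE : E ⊆ E₀ ∪ X.biUnion A) (hv : v ∈ playable E) :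
    ∃ x ∈ X, (∀ y ∈ X, y ≠ x →
        pendantDegree A (E.filter (fun e => v ∉ e)) y = pendantDegree A E y) ∧
      (pendantDegree A (E.filter (fun e => v ∉ e)) x = 0 ∨
        pendantDegree A (E.filter (fun e => v ∉ e)) x + 1 = pendantDegree A E x) := by
  by_cases hvX : v ∈ X
  · obtain ⟨hoff, hself⟩ := hH.pendantDegree_filter_self (E := E) hvX
    exact ⟨v, hvX, hoff, Or.inl hself⟩
  obtain ⟨e, he, hve⟩ := mem_playable.1 hv
  rcases mem_union.1 (hE he) with he₀ | heA
  · exact absurd ((hH.base e he₀).2 hve) hvX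
  obtain ⟨x, hx, hex⟩ := mem_biUnion.1 heA
  obtain ⟨hoff, hleaf⟩ := hH.pendantDegree_filter_leaf hx hex he hve fun h => hvX (h ▸ hx)
  exact ⟨x, hx, hoff, Or.inr hleaf⟩

theorem exists_leaf_move (hx : x ∈ X) (hd : 0 < pendantDegree A E x) :
    ∃ v ∈ playable E, (∀ y ∈ X, y ≠ x →
        pendantDegree A (E.filter (fun e => v ∉ e)) y = pendantDegree A E y) ∧
      pendantDegree A (E.filter (fun e => v ∉ e)) x + 1 = pendantDegree A E x := by
  obtain ⟨f, hfE⟩ := card_pos.1 hd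
  rw [mem_filter] at hfE
  obtain ⟨v, hv, hvx⟩ := exists_mem_ne (hH.pendant x hx f hfE.1).2 x
  exact ⟨v, mem_playable.2 ⟨f, hfE.2, hv⟩,
    hH.pendantDegree_filter_leaf hx hfE.1 hfE.2 hv hvx⟩

theorem potential_eq_zero (h : ¬(playable E).Nonempty) :
    potential X (pendantDegree A E) = 0 := by
  refine sum_eq_zero fun x hx => ?_
  suffices pendantDegree A E x = 0 by rw [this]; rfl
  refine card_eq_zero.2 (filter_eq_empty_iff.2 fun f hf hfE => h ?_)
  exact ⟨x, mem_playable.2 ⟨f, hfE, (hH.pendant x hx f hf).1⟩⟩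

theorem edgeHitterBound (hA : ∀ x ∈ X, (A x).card ≤ k) (hE : E ⊆ E₀ ∪ X.biUnion A)
    (ih : ∀ v ∈ playable E, ∀ m, StallerBound k X A (E.filter (fun e => v ∉ e)) m)
    (m : ℕ) :
    EdgeHitterBound k X A E m := by
  intro hW
  by_cases h : (playable E).Nonempty
  · suffices potential X (pendantDegree A E) - m ≤ gameVal true E by omega
    refine le_gameVal_true h fun v hv => ?_
    obtain ⟨x, hx, hoff, hd⟩ := hH.exists_pendantDegree_filter hE hv
    rcases potential_weight_of_move hx hoff hd (pendantDegree_le_card.trans (hA x hx))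
      with ⟨hP, hW'⟩ | ⟨hP, hW'⟩
    · have := ih v hv m (by omega)
      omega
    · have := ih v hv (m + 1) (by rw [add_one_mul]; omega)
      omega
  · rw [hH.potential_eq_zero h]
    exact Nat.zero_le _

theorem stallerBound_of_exists_two_le (hA : ∀ x ∈ X, (A x).card ≤ k)
    (ih : ∀ v ∈ playable E, ∀ m, EdgeHitterBound k X A (E.filter (fun e => v ∉ e)) m)
    (hbig : ∃ x ∈ X, 2 ≤ pendantDegree A E x) (m : ℕ) :
    StallerBound k X A E m := by
  intro hW
  have hm : 1 ≤ m := Nat.one_le_iff_ne_zero.2 fun h => by simp [h] at hW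
  obtain ⟨x, hx, hmax⟩ := exists_max_image (X.filter fun y => 2 ≤ pendantDegree A E y)
    (pendantDegree A E) <| by
      obtain ⟨y, hy, h2⟩ := hbig
      exact ⟨y, mem_filter.2 ⟨hy, h2⟩⟩
  obtain ⟨hx, h2⟩ := mem_filter.1 hx
  obtain ⟨v, hv, hoff, hleaf⟩ := hH.exists_leaf_move hx (E := E) (by omega)
  have hdk : pendantDegree A E x ≤ k := pendantDegree_le_card.trans (hA x hx)
  -- all summands of the weight, and the threshold, are multiples of `2 ^ (k - d x)`
  have hroom : weight k X (pendantDegree A E) + 2 ^ (k - pendantDegree A E x) ≤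
      m * 2 ^ (k - 1) :=
    Nat.add_le_of_dvd_of_lt
      (two_pow_dvd_weight fun y hy h2 => hmax y (mem_filter.2 ⟨hy, h2⟩))
      (Dvd.dvd.mul_left (pow_dvd_pow 2 (by omega)) m) (by omega)
  have hgv := le_gameVal_false_of_mem hv
  rcases h2.eq_or_lt with h2 | h3
  · obtain ⟨hP, hW'⟩ := potential_weight_of_leaf_two (k := k) hx hoff hleaf h2.symm
    have hpow : 2 ^ (k - 1) = 2 ^ (k - 2) * 2 := by
      rw [← pow_succ]
      congr 1
      omega
    rw [← h2] at hroom
    have := ih v hv (m - 1) (by rw [Nat.sub_one_mul]; omega)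
    omega
  · obtain ⟨hP, hW'⟩ := potential_weight_of_leaf_of_three_le hx hoff hleaf h3 hdk
    have := ih v hv m (by omega)
    omega

theorem stallerBound_of_forall_le_one (hA : ∀ x ∈ X, (A x).card ≤ k)
    (hE : E ⊆ E₀ ∪ X.biUnion A)
    (ih : ∀ v ∈ playable E, ∀ m, EdgeHitterBound k X A (E.filter (fun e => v ∉ e)) m)
    (hsmall : ∀ x ∈ X, pendantDegree A E x ≤ 1) (m : ℕ) :
    StallerBound k X A E m := by
  intro hW
  have hm : 1 ≤ m := Nat.one_le_iff_ne_zero.2 fun h => by simp [h] at hW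
  by_cases h : (playable E).Nonempty
  · obtain ⟨v, hv⟩ := h
    obtain ⟨x, hx, hoff, hd⟩ := hH.exists_pendantDegree_filter hE hv
    have hsmall' : ∀ y ∈ X, pendantDegree A (E.filter (fun e => v ∉ e)) y ≤ 1 := by
      intro y hy
      have := hsmall y hy
      by_cases hyx : y = x
      · subst hyx
        omega
      · rw [hoff y hy hyx]
        omega
    have hP : potential X (pendantDegree A E) ≤
        potential X (pendantDegree A (E.filter (fun e => v ∉ e))) + 1 := by
      rcases potential_weight_of_move (k := k) hx hoff hd (pendantDegree_le_card.trans (hA x hx))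
        with ⟨-, hlt⟩ | ⟨hP, -⟩
      · rw [weight_eq_zero hsmall] at hlt
        omega
      · exact hP
    have := ih v hv (m - 1) (by rw [weight_eq_zero hsmall']; exact Nat.zero_le _)
    have := le_gameVal_false_of_mem hv
    omega
  · rw [hH.potential_eq_zero h, gameVal_of_not_nonempty false h]
    omega

theorem stallerBound (hA : ∀ x ∈ X, (A x).card ≤ k) (hE : E ⊆ E₀ ∪ X.biUnion A)
    (ih : ∀ v ∈ playable E, ∀ m, EdgeHitterBound k X A (E.filter (fun e => v ∉ e)) m)
    (m : ℕ) :
    StallerBound k X A E m := by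
  by_cases hbig : ∃ x ∈ X, 2 ≤ pendantDegree A E x
  · exact hH.stallerBound_of_exists_two_le hA ih hbig m
  · push Not at hbig
    exact hH.stallerBound_of_forall_le_one hA hE ih (fun x hx => Nat.le_of_lt_succ (hbig x hx)) m

theorem edgeHitterBound_and_stallerBound (hA : ∀ x ∈ X, (A x).card ≤ k)
    (hE : E ⊆ E₀ ∪ X.biUnion A) (m : ℕ) :
    EdgeHitterBound k X A E m ∧ StallerBound k X A E m := by
  induction E using Finset.strongInduction generalizing m with
  | H E ih =>
  have ih' : ∀ v ∈ playable E, ∀ m, EdgeHitterBound k X A (E.filter (fun e => v ∉ e)) m ∧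
      StallerBound k X A (E.filter (fun e => v ∉ e)) m := fun v hv m =>
    ih _ (filter_ssubset_of_mem_playable hv) ((filter_subset _ _).trans hE) m
  exact ⟨hH.edgeHitterBound hA hE (fun v hv m => (ih' v hv m).2) m,
    hH.stallerBound hA hE (fun v hv m => (ih' v hv m).1) m⟩

theorem two_mul_card_le_gameVal (hA : ∀ x ∈ X, (A x).card = k) (hn : X.card < 2 ^ (k - 1)) :
    2 * X.card ≤ gameVal true (E₀ ∪ X.biUnion A) + 1 ∧
      2 * X.card ≤ gameVal false (E₀ ∪ X.biUnion A) := by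
  have hk : ∀ x ∈ X, 2 ≤ k := fun x hx => two_le_of_mem_of_card_lt hx hn
  have hd : ∀ x ∈ X, pendantDegree A (E₀ ∪ X.biUnion A) x = k := fun x hx => by
    rw [pendantDegree, filter_true_of_mem (s := A x) fun f hf =>
      mem_union_right E₀ (mem_biUnion.2 ⟨x, hx, hf⟩), hA x hx]
  have hP : potential X (pendantDegree A (E₀ ∪ X.biUnion A)) = 2 * X.card := by
    rw [potential, sum_congr rfl fun x hx => by rw [hd x hx, min_eq_right (hk x hx)], sum_const,
      smul_eq_mul, mul_comm]
  have hW : weight k X (pendantDegree A (E₀ ∪ X.biUnion A)) = X.card := by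
    rw [weight, sum_congr rfl fun x hx => by
      rw [hd x hx, if_pos (hk x hx), Nat.sub_self, pow_zero], sum_const, smul_eq_mul, mul_one]
  obtain ⟨hEH, hS⟩ :=
    hH.edgeHitterBound_and_stallerBound (fun x hx => (hA x hx).le) subset_rfl 1
  simp only [EdgeHitterBound, StallerBound, hP, hW, one_mul] at hEH hS
  exact ⟨hEH hn.le, by have := hS hn; omega⟩

end IsCorona

end

end Corona

theorem corona_gameTransversalNum_general
    {W : Type} [Fintype W] [DecidableEq W]
    (k : ℕ)
    (X : Finset W) (E₀ : Finset (Finset W))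
    (hE₀ : ∀ e ∈ E₀, e.Nonempty ∧ e ⊆ X)
    (A : W → Finset (Finset W))
    (hAcard : ∀ x ∈ X, (A x).card = k)
    (hAmem : ∀ x ∈ X, ∀ f ∈ A x, x ∈ f ∧ 2 ≤ f.card)
    (hAnew : ∀ x ∈ X, ∀ f ∈ A x, ∀ w ∈ f, w ≠ x →
      w ∉ X ∧ (∀ e ∈ E₀, w ∉ e) ∧
        ∀ y ∈ X, ∀ g ∈ A y, w ∈ g → y = x ∧ g = f)
    (hn : X.card ≤ 2 ^ (k - 1) - 1) :
    gameTransversalNum (E₀ ∪ X.biUnion A) =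
        2 * transversalNum (E₀ ∪ X.biUnion A) - 1 ∧
      gameTransversalNum (E₀ ∪ X.biUnion A) = 2 * X.card - 1 ∧
      stallerGameTransversalNum (E₀ ∪ X.biUnion A) =
        2 * transversalNum (E₀ ∪ X.biUnion A) ∧
      stallerGameTransversalNum (E₀ ∪ X.biUnion A) = 2 * X.card := by
  have hH : Corona.IsCorona X E₀ A := ⟨hE₀, hAmem, hAnew⟩
  have hn' : X.card < 2 ^ (k - 1) := by
    have := Nat.one_le_two_pow (n := k - 1)
    omega
  have hτ : transversalNum (E₀ ∪ X.biUnion A) = X.card :=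
    hH.transversalNum_eq fun x hx => card_pos.1 <| by
      rw [hAcard x hx]
      exact two_pos.trans_le (two_le_of_mem_of_card_lt hx hn')
  obtain ⟨hup, hup'⟩ := gameVal_le_of_isTransversal hH.isTransversal
  obtain ⟨hlow, hlow'⟩ := hH.two_mul_card_le_gameVal hAcard hn'
  simp only [gameTransversalNum, stallerGameTransversalNum, hτ]
  omega

/-- Let `H` be a hypergraph with vertex set `X` and edge set `E₀`, of order
`n = |X| ≤ 2^(k-1) - 1`, and let `H^k` be a `k`-corona of `H`: to each vertex `x ∈ X`
we attach `k` hyperedges (the members of `A x`), each of size at least `2`, containing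
`x` and otherwise only new vertices of degree `1`.  Then
`τ_g(H^k) = 2τ(H^k) - 1 = 2n - 1` and `τ_g'(H^k) = 2τ(H^k) = 2n`. -/
theorem corona_gameTransversalNum
    {W : Type} [Fintype W] [DecidableEq W]
    (k : ℕ) (hk : 1 ≤ k)
    (X : Finset W) (E₀ : Finset (Finset W))
    (hE₀ : ∀ e ∈ E₀, e.Nonempty ∧ e ⊆ X)
    (A : W → Finset (Finset W))
    (hAcard : ∀ x ∈ X, (A x).card = k)
    (hAmem : ∀ x ∈ X, ∀ f ∈ A x, x ∈ f ∧ 2 ≤ f.card)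
    (hAnew : ∀ x ∈ X, ∀ f ∈ A x, ∀ w ∈ f, w ≠ x →
      w ∉ X ∧ (∀ e ∈ E₀, w ∉ e) ∧
        ∀ y ∈ X, ∀ g ∈ A y, w ∈ g → y = x ∧ g = f)
    (hn : X.card ≤ 2 ^ (k - 1) - 1) :
    gameTransversalNum (E₀ ∪ X.biUnion A) =
        2 * transversalNum (E₀ ∪ X.biUnion A) - 1 ∧
      gameTransversalNum (E₀ ∪ X.biUnion A) = 2 * X.card - 1 ∧
      stallerGameTransversalNum (E₀ ∪ X.biUnion A) =
        2 * transversalNum (E₀ ∪ X.biUnion A) ∧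
      stallerGameTransversalNum (E₀ ∪ X.biUnion A) = 2 * X.card :=
  corona_gameTransversalNum_general k X E₀ hE₀ A hAcard hAmem hAnew hn
end

section
/- If H is a 3-uniform hypergraph with maximum degree Δ(H) ≤ 2, then τ_g(H) ≤ n(H)/2. -/
variable {V : Type} [Fintype V] [DecidableEq V]

/-!
Let `s(E)` be the number of non-isolated vertices and `Φ(E) = 3|E| + s(E)`. We show
`6 τ_g ≤ Φ` and `6 τ_g' ≤ Φ + 2` by induction. Playing `v` lowers `Φ` by `3 d(v)` plus the
number of vertices it isolates, hence by at least `4`, which gives the Staller-start bound.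
Edge-hitter can always lower `Φ` by `8`, or by `6` when `3 ∣ Φ`: if some edge has vertices of
degrees `1` and `2`, play the one of degree `2`; otherwise every edge has all its vertices of
equal degree, and double counting `∑ (3 - d(u)) = 2 s` over the edges shows `3 ∣ s`, so any
vertex will do (a vertex of degree `1` isolates its whole edge). As `3|E| = ∑ d(u) ≤ 2 s`,
`Φ ≤ 3 s ≤ 3 n`.
-/

open Finset

namespace TransversalGame

def residual (E : Finset (Finset V)) (v : V) : Finset (Finset V) := {e ∈ E | v ∉ e}

def degree (E : Finset (Finset V)) (v : V) : ℕ := #{e ∈ E | v ∈ e}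

def potential (E : Finset (Finset V)) : ℕ := 3 * #E + #(playable E)

variable {E E' : Finset (Finset V)} {u v : V}

theorem mem_playable : v ∈ playable E ↔ ∃ e ∈ E, v ∈ e := by
  simp [playable]

theorem mem_playable_iff_degree_pos : v ∈ playable E ↔ 0 < degree E v := by
  rw [mem_playable, degree, card_pos, filter_nonempty_iff]

omit [Fintype V] in
theorem degree_mono (h : E' ⊆ E) (v : V) : degree E' v ≤ degree E v :=
  card_le_card (filter_subset_filter _ h)

theorem playable_mono (h : E' ⊆ E) : playable E' ⊆ playable E := fun _ hv => by
  obtain ⟨e, he, hve⟩ := mem_playable.mp hv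
  exact mem_playable.mpr ⟨e, h he, hve⟩

omit [Fintype V] in
theorem residual_subset : residual E v ⊆ E := filter_subset _ _

theorem residual_ssubset (hv : v ∈ playable E) : residual E v ⊂ E := by
  obtain ⟨e, he, hve⟩ := mem_playable.mp hv
  exact filter_ssubset.mpr ⟨e, he, not_not.mpr hve⟩

omit [Fintype V] in
theorem card_residual_add_degree : #(residual E v) + degree E v = #E := by
  rw [residual, degree, add_comm]
  exact card_filter_add_card_filter_not _

theorem notMem_playable_residual_self : v ∉ playable (residual E v) := fun h => by
  obtain ⟨e, he, hve⟩ := mem_playable.mp h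
  exact (mem_filter.mp he).2 hve

theorem notMem_playable_residual_of_degree_eq_one {e : Finset V} (he : e ∈ E) (hve : v ∈ e)
    (hue : u ∈ e) (hu : degree E u = 1) : u ∉ playable (residual E v) := fun h => by
  obtain ⟨f, hf, huf⟩ := mem_playable.mp h
  obtain ⟨hfE, hvf⟩ := mem_filter.mp hf
  have hfe : f = e := card_le_one.mp hu.le f (mem_filter.mpr ⟨hfE, huf⟩) e (mem_filter.mpr ⟨he, hue⟩)
  exact hvf (hfe ▸ hve)

theorem potential_residual_add_le {S : Finset V} (hS : S ⊆ playable E)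
    (hSv : ∀ u ∈ S, u ∉ playable (residual E v)) :
    potential (residual E v) + 3 * degree E v + #S ≤ potential E := by
  have hsub : playable (residual E v) ⊆ playable E \ S := fun u hu =>
    mem_sdiff.mpr ⟨playable_mono residual_subset hu, fun huS => hSv u huS hu⟩
  have hcard := card_le_card hsub
  rw [card_sdiff_of_subset hS] at hcard
  have := card_le_card hS
  have := card_residual_add_degree (E := E) (v := v)
  unfold potential
  omega

theorem potential_residual_add_le_of_mem (hv : v ∈ playable E) :
    potential (residual E v) + 3 * degree E v + 1 ≤ potential E := by
  simpa using potential_residual_add_le (singleton_subset_iff.mpr hv)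
    (by simpa using notMem_playable_residual_self)

theorem sum_sum_eq_sum_degree_smul {M : Type*} [AddCommMonoid M] (f : V → M) :
    ∑ e ∈ E, ∑ u ∈ e, f u = ∑ u, degree E u • f u := by
  rw [sum_comm' (t' := univ) (s' := fun u => {e ∈ E | u ∈ e}) (by simp)]
  simp [degree]

theorem sum_sum_three_sub_degree (hΔ : ∀ v, degree E v ≤ 2) :
    ∑ e ∈ E, ∑ u ∈ e, (3 - degree E u) = 2 * #(playable E) := by
  have hpt : ∀ u, degree E u • (3 - degree E u) = if u ∈ playable E then 2 else 0 := fun u => by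
    have := hΔ u
    by_cases hu : u ∈ playable E
    · rw [if_pos hu, smul_eq_mul]
      have := mem_playable_iff_degree_pos.mp hu
      interval_cases degree E u <;> rfl
    · have h0 : degree E u = 0 := by simpa [mem_playable_iff_degree_pos] using hu
      rw [if_neg hu, h0, zero_smul]
  rw [sum_sum_eq_sum_degree_smul, sum_congr rfl fun u _ => hpt u, sum_ite_mem, univ_inter,
    sum_const, smul_eq_mul, mul_comm]

theorem three_mul_card_le (h3 : ∀ e ∈ E, #e = 3) (hΔ : ∀ v, degree E v ≤ 2) :
    3 * #E ≤ 2 * #(playable E) := by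
  calc 3 * #E = ∑ e ∈ E, ∑ u ∈ e, 1 := by simp [sum_congr rfl h3, mul_comm]
    _ ≤ ∑ e ∈ E, ∑ u ∈ e, (3 - degree E u) :=
        sum_le_sum fun e _ => sum_le_sum fun u _ => by have := hΔ u; omega
    _ = 2 * #(playable E) := sum_sum_three_sub_degree hΔ

theorem three_dvd_card_playable (h3 : ∀ e ∈ E, #e = 3) (hΔ : ∀ v, degree E v ≤ 2)
    (hreg : ∀ e ∈ E, ∀ a ∈ e, ∀ b ∈ e, degree E a = degree E b) : 3 ∣ #(playable E) := by
  have hedge : ∀ e ∈ E, 3 ∣ ∑ u ∈ e, (3 - degree E u) := fun e he => by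
    obtain ⟨a, ha⟩ := card_pos.mp (by rw [h3 e he]; omega : 0 < #e)
    rw [sum_congr rfl fun b hb => by rw [hreg e he b hb a ha], sum_const, h3 e he, smul_eq_mul]
    exact dvd_mul_right 3 _
  have h2s : 3 ∣ 2 * #(playable E) := sum_sum_three_sub_degree hΔ ▸ dvd_sum hedge
  exact (Nat.Coprime.dvd_mul_left (by norm_num)).mp h2s

theorem gameVal_eq_zero (h : ¬(playable E).Nonempty) (b : Bool) : gameVal b E = 0 := by
  rw [gameVal, dif_neg h]

theorem gameVal_true_le (hv : v ∈ playable E) :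
    gameVal true E ≤ 1 + gameVal false (residual E v) := by
  rw [gameVal, dif_pos ⟨v, hv⟩]
  exact Nat.add_le_add_left (inf'_le _ (mem_attach _ ⟨v, hv⟩)) 1

theorem exists_gameVal_false_eq (h : (playable E).Nonempty) :
    ∃ v ∈ playable E, gameVal false E = 1 + gameVal true (residual E v) := by
  rw [gameVal, dif_pos h]
  obtain ⟨⟨v, hv⟩, -, hmax⟩ := exists_mem_eq_sup' (attach_nonempty_iff.mpr h)
    fun v : playable E => gameVal true (residual E v.1)
  exact ⟨v, hv, by simpa [residual] using hmax⟩

theorem exists_good_move (h3 : ∀ e ∈ E, #e = 3) (hΔ : ∀ v, degree E v ≤ 2)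
    (hE : (playable E).Nonempty) :
    ∃ v ∈ playable E, potential (residual E v) + 8 ≤ potential E ∨
      3 ∣ potential E ∧ potential (residual E v) + 6 ≤ potential E := by
  have hdeg : ∀ e ∈ E, ∀ u ∈ e, degree E u = 1 ∨ degree E u = 2 := fun e he u hu => by
    have := mem_playable_iff_degree_pos.mp (mem_playable.mpr ⟨e, he, hu⟩)
    have := hΔ u
    omega
  by_cases hreg : ∀ e ∈ E, ∀ a ∈ e, ∀ b ∈ e, degree E a = degree E b
  · have h3Φ : 3 ∣ potential E := dvd_add (dvd_mul_right 3 _) (three_dvd_card_playable h3 hΔ hreg)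
    obtain ⟨x, hx⟩ := hE
    obtain ⟨e, he, hxe⟩ := mem_playable.mp hx
    refine ⟨x, hx, Or.inr ⟨h3Φ, ?_⟩⟩
    rcases hdeg e he x hxe with hx1 | hx2
    · have he_dead : ∀ u ∈ e, u ∉ playable (residual E x) := fun u hu =>
        notMem_playable_residual_of_degree_eq_one he hxe hu (hreg e he u hu x hxe ▸ hx1)
      have := potential_residual_add_le (fun u hu => mem_playable.mpr ⟨e, he, hu⟩) he_dead
      rw [h3 e he] at this
      omega
    · have := potential_residual_add_le_of_mem hx
      omega
  · push Not at hreg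
    obtain ⟨e, he, a, ha, b, hb, hab⟩ := hreg
    obtain ⟨a, ha, b, hb, ha1, hb2⟩ : ∃ a ∈ e, ∃ b ∈ e, degree E a = 1 ∧ degree E b = 2 := by
      rcases hdeg e he a ha with ha' | ha' <;> rcases hdeg e he b hb with hb' | hb'
      all_goals first | omega | exact ⟨a, ha, b, hb, ha', hb'⟩ | exact ⟨b, hb, a, ha, hb', ha'⟩
    have hb_play : b ∈ playable E := mem_playable.mpr ⟨e, he, hb⟩
    refine ⟨b, hb_play, Or.inl ?_⟩
    have hS : {a, b} ⊆ playable E := insert_subset (mem_playable.mpr ⟨e, he, ha⟩)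
      (singleton_subset_iff.mpr hb_play)
    have hS_dead : ∀ u ∈ ({a, b} : Finset V), u ∉ playable (residual E b) := by
      simpa using ⟨notMem_playable_residual_of_degree_eq_one he hb ha ha1,
        notMem_playable_residual_self⟩
    have := potential_residual_add_le hS hS_dead
    rw [card_pair (fun h => by rw [h] at ha1; omega)] at this
    omega

theorem six_mul_gameVal_le_potential (h3 : ∀ e ∈ E, #e = 3) (hΔ : ∀ v, degree E v ≤ 2) :
    6 * gameVal true E ≤ potential E ∧ 6 * gameVal false E ≤ potential E + 2 := by
  induction E using Finset.strongInduction with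
  | H E ih =>
  by_cases hE : (playable E).Nonempty
  swap
  · simp [gameVal_eq_zero hE]
  have ih_residual : ∀ v ∈ playable E, 6 * gameVal true (residual E v) ≤ potential (residual E v) ∧
      6 * gameVal false (residual E v) ≤ potential (residual E v) + 2 := fun v hv =>
    ih _ (residual_ssubset hv) (fun e he => h3 e (residual_subset he))
      (fun u => (degree_mono residual_subset u).trans (hΔ u))
  constructor
  · obtain ⟨v, hv, hgood⟩ := exists_good_move h3 hΔ hE
    have := gameVal_true_le hv
    have := (ih_residual v hv).2
    omega
  · obtain ⟨v, hv, hmax⟩ := exists_gameVal_false_eq hE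
    have := (ih_residual v hv).1
    have := potential_residual_add_le_of_mem hv
    have := mem_playable_iff_degree_pos.mp hv
    omega

end TransversalGame

/-- If `H` is a `3`-uniform hypergraph with maximum degree at most `2`,
then `τ_g(H) ≤ n(H)/2`. -/
theorem gameTransversalNum_le_half_order_of_three_uniform_maxDegree_le_two
    {V : Type} [Fintype V] [DecidableEq V] (E : Finset (Finset V))
    (h3 : ∀ e ∈ E, e.card = 3)
    (hΔ : ∀ v : V, (E.filter (fun e => v ∈ e)).card ≤ 2) :
    (gameTransversalNum E : ℚ) ≤ (Fintype.card V : ℚ) / 2 := by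
  have hτ := (TransversalGame.six_mul_gameVal_le_potential h3 hΔ).1
  have hE := TransversalGame.three_mul_card_le h3 hΔ
  have hV := Finset.card_le_univ (playable E)
  have h2 : gameTransversalNum E * 2 ≤ Fintype.card V := by
    unfold gameTransversalNum
    unfold TransversalGame.potential at hτ
    omega
  rw [le_div_iff₀ two_pos]
  exact_mod_cast h2
end
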